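/- arXiv:0910.1359 — 2 statements merged into one kernel-verified Lean document; each statement's English description precedes it below -/
import Mathlib

section
/- Let X be a continuous positive random variable with density f such that the function x ↦ x·f(x) attains its maximum m at some a > 0, is nondecreasing on (0, a], and nonincreasing on [a, ∞). Then for every z ∈ (0, 1], |P({log₁₀ X} < z) − z| < 2·ln(10)·m. -/
open Function MeasureTheory Set

/-!
Write `G x = x f x`. The mass of `[c, d) ⊆ (0, ∞)` is `∫ G x dx / x`, so it lies between
`(inf G) log (d / c)` and `(sup G) log (d / c)`, the infimum and supremum being taken over `[c, d]`.
Split each decade `I = [10ⁿ, 10ⁿ⁺¹)` at `10ⁿ⁺ᶻ` into `J ∪ K`. The event `{log₁₀ X} < z` is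
the disjoint union of the pieces `J`, so the error `P({log₁₀ X} < z) - z` is the sum over
all decades of `P(J) - z P(I) = (1 - z) P(J) - z P(K)`, which is `z (1 - z) log 10` times the
difference of two averages of `G` over the decade. It is therefore bounded by
`z (1 - z) log 10` times the oscillation of `G` on the decade. Because `G` increases up to `a`
and then decreases, these oscillations add up to at most `2 m`, which bounds the total
error by `2 z (1 - z) log 10 · m ≤ (log 10 / 2) m`.
-/

def logSlice (b : ℝ) (n : ℤ) (w : ℝ) : Set ℝ := Ico (b ^ (n : ℝ)) (b ^ ((n : ℝ) + w))

section logSlice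

variable {b w : ℝ}

lemma mem_logSlice_iff (hb : 1 < b) (hw : w ≤ 1) {n : ℤ} {x : ℝ} :
    x ∈ logSlice b n w ↔ 0 < x ∧ ⌊Real.logb b x⌋ = n ∧ Int.fract (Real.logb b x) < w := by
  constructor
  · rintro ⟨hlo, hhi⟩
    have hx : 0 < x := (Real.rpow_pos_of_pos (by linarith) _).trans_le hlo
    rw [← Real.le_logb_iff_rpow_le hb hx] at hlo
    rw [← Real.logb_lt_iff_lt_rpow hb hx] at hhi
    have hfloor : ⌊Real.logb b x⌋ = n := Int.floor_eq_iff.2 ⟨hlo, by linarith⟩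
    exact ⟨hx, hfloor, by rw [← Int.self_sub_floor, hfloor]; linarith⟩
  · rintro ⟨hx, rfl, hfract⟩
    refine ⟨(Real.le_logb_iff_rpow_le hb hx).1 (Int.floor_le _),
      (Real.logb_lt_iff_lt_rpow hb hx).1 ?_⟩
    linarith [Int.floor_add_fract (Real.logb b x)]

lemma iUnion_logSlice (hb : 1 < b) (hw : w ≤ 1) :
    ⋃ n : ℤ, logSlice b n w = {x | 0 < x ∧ Int.fract (Real.logb b x) < w} := by
  ext x
  simp [mem_logSlice_iff hb hw]

lemma pairwise_disjoint_logSlice (hb : 1 < b) (hw : w ≤ 1) :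
    Pairwise (Disjoint on fun n : ℤ => logSlice b n w) := by
  intro n n' hne
  refine Set.disjoint_left.2 fun x hx hx' => hne ?_
  rw [← ((mem_logSlice_iff hb hw).1 hx).2.1, ← ((mem_logSlice_iff hb hw).1 hx').2.1]

end logSlice

section MeasureSeries

variable {α ι : Type*} [MeasurableSpace α] {μ : Measure α} [IsFiniteMeasure μ]

lemma hasSum_measureReal_iUnion [Countable ι] {s : ι → Set α}
    (hd : Pairwise (Disjoint on s)) (hs : ∀ i, MeasurableSet (s i)) :
    HasSum (fun i => μ.real (s i)) (μ.real (⋃ i, s i)) := by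
  have hfin : ∑' i, μ (s i) ≠ ⊤ := by
    rw [← measure_iUnion hd hs]; exact measure_ne_top μ _
  rw [measureReal_def, measure_iUnion hd hs, ENNReal.tsum_toReal_eq fun i => measure_ne_top μ _]
  exact ENNReal.hasSum_toReal hfin

lemma withDensity_ofReal_eq_zero (ν : Measure α) {f : α → ℝ} {s : Set α} (hs : MeasurableSet s)
    (hf : ∀ x ∈ s, f x ≤ 0) : ν.withDensity (fun x => ENNReal.ofReal (f x)) s = 0 := by
  rw [withDensity_apply _ hs,
    setLIntegral_congr_fun hs (g := fun _ => 0) fun x hx => ENNReal.ofReal_eq_zero.2 (hf x hx),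
    lintegral_zero]

end MeasureSeries

section LogSliceMeasure

variable {μ : Measure ℝ} [IsFiniteMeasure μ] {b w : ℝ}

lemma hasSum_measureReal_logSlice (hb : 1 < b) (hw : w ≤ 1) (hμ0 : μ (Iic 0) = 0) :
    HasSum (fun n : ℤ => μ.real (logSlice b n w))
      (μ.real {x | Int.fract (Real.logb b x) < w}) := by
  have hpos : μ.real {x | 0 < x ∧ Int.fract (Real.logb b x) < w}
      = μ.real {x | Int.fract (Real.logb b x) < w} := by
    rw [measureReal_def, measureReal_def,
      ← measure_inter_conull (s := {x | Int.fract (Real.logb b x) < w}) (by rwa [compl_Ioi])]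
    congr 2
    ext x
    exact and_comm
  rw [← hpos, ← iUnion_logSlice hb hw]
  exact hasSum_measureReal_iUnion (pairwise_disjoint_logSlice hb hw) fun _ => measurableSet_Ico

lemma hasSum_logSlice_error [IsProbabilityMeasure μ] (hb : 1 < b) {z : ℝ} (hz : z ≤ 1)
    (hμ0 : μ (Iic 0) = 0) :
    HasSum (fun n : ℤ => μ.real (logSlice b n z) - z * μ.real (logSlice b n 1))
      (μ.real {x | Int.fract (Real.logb b x) < z} - z) := by
  have hdecades := hasSum_measureReal_logSlice (μ := μ) hb le_rfl hμ0
  simp only [Int.fract_lt_one, ofPred_true, probReal_univ] at hdecades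
  simpa using (hasSum_measureReal_logSlice hb hz hμ0).sub (hdecades.mul_left z)

end LogSliceMeasure

section Density

variable {μ : Measure ℝ} {f : ℝ → ℝ} {c d H : ℝ}

lemma lintegral_Ico_ofReal_mul_inv (hc : 0 < c) (hcd : c ≤ d) :
    ∫⁻ x in Ico c d, ENNReal.ofReal (H * x⁻¹) = ENNReal.ofReal (H * Real.log (d / c)) := by
  have hinv : ∫⁻ x in Ico c d, ENNReal.ofReal x⁻¹ = ENNReal.ofReal (Real.log (d / c)) := by
    have hint : IntervalIntegrable (fun x : ℝ => x⁻¹) volume c d :=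
      intervalIntegral.intervalIntegrable_inv
        (fun x hx => by rw [uIcc_of_le hcd] at hx; exact (hc.trans_le hx.1).ne') continuousOn_id
    rw [setLIntegral_congr Ico_ae_eq_Ioc, ← integral_inv_of_pos hc (hc.trans_le hcd),
      intervalIntegral.integral_of_le hcd, ofReal_integral_eq_lintegral_ofReal
        ((intervalIntegrable_iff_integrableOn_Ioc_of_le hcd).1 hint)]
    filter_upwards [ae_restrict_mem measurableSet_Ioc] with x hx
    exact inv_nonneg.2 (hc.trans hx.1).le
  have hlog : 0 ≤ Real.log (d / c) := Real.log_nonneg ((one_le_div hc).2 hcd)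
  calc ∫⁻ x in Ico c d, ENNReal.ofReal (H * x⁻¹)
      = ∫⁻ x in Ico c d, ENNReal.ofReal H * ENNReal.ofReal x⁻¹ :=
        setLIntegral_congr_fun measurableSet_Ico fun x hx =>
          ENNReal.ofReal_mul' (inv_nonneg.2 (hc.le.trans hx.1))
    _ = ENNReal.ofReal H * ENNReal.ofReal (Real.log (d / c)) := by
        rw [lintegral_const_mul _ measurable_inv.ennreal_ofReal, hinv]
    _ = ENNReal.ofReal (H * Real.log (d / c)) := (ENNReal.ofReal_mul' hlog).symm

lemma measureReal_Ico_le_of_mul_le (hμ : μ = volume.withDensity fun x => ENNReal.ofReal (f x))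
    (hc : 0 < c) (hcd : c ≤ d) (hH : 0 ≤ H) (hf : ∀ x ∈ Ico c d, x * f x ≤ H) :
    μ.real (Ico c d) ≤ H * Real.log (d / c) := by
  refine ENNReal.toReal_le_of_le_ofReal
    (mul_nonneg hH (Real.log_nonneg ((one_le_div hc).2 hcd))) ?_
  rw [hμ, withDensity_apply _ measurableSet_Ico, ← lintegral_Ico_ofReal_mul_inv hc hcd]
  refine setLIntegral_mono' measurableSet_Ico fun x hx => ENNReal.ofReal_le_ofReal ?_
  rw [← div_eq_mul_inv, le_div_iff₀ (hc.trans_le hx.1), mul_comm]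
  exact hf x hx

lemma le_measureReal_Ico_of_le_mul [IsFiniteMeasure μ]
    (hμ : μ = volume.withDensity fun x => ENNReal.ofReal (f x))
    (hc : 0 < c) (hcd : c ≤ d) (hf : ∀ x ∈ Ico c d, H ≤ x * f x) :
    H * Real.log (d / c) ≤ μ.real (Ico c d) := by
  refine (ENNReal.ofReal_le_iff_le_toReal (measure_ne_top μ _)).1 ?_
  rw [hμ, withDensity_apply _ measurableSet_Ico, ← lintegral_Ico_ofReal_mul_inv hc hcd]
  refine setLIntegral_mono' measurableSet_Ico fun x hx => ENNReal.ofReal_le_ofReal ?_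
  rw [← div_eq_mul_inv, div_le_iff₀ (hc.trans_le hx.1), mul_comm]
  exact hf x hx

end Density

lemma abs_measureReal_logSlice_sub_le {μ : Measure ℝ} [IsFiniteMeasure μ] {f : ℝ → ℝ}
    (hμ : μ = volume.withDensity fun x => ENNReal.ofReal (f x)) {b z lo hi : ℝ} (hb : 1 < b)
    (n : ℤ) (hz0 : 0 ≤ z) (hz1 : z ≤ 1) (hlo : 0 ≤ lo)
    (hf : ∀ x ∈ Icc (b ^ (n : ℝ)) (b ^ ((n : ℝ) + 1)), lo ≤ x * f x ∧ x * f x ≤ hi) :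
    |μ.real (logSlice b n z) - z * μ.real (logSlice b n 1)|
      ≤ z * (1 - z) * Real.log b * (hi - lo) := by
  have hb0 : 0 < b := by linarith
  have hlogJ : Real.log (b ^ ((n : ℝ) + z) / b ^ (n : ℝ)) = z * Real.log b := by
    rw [← Real.rpow_sub hb0, add_sub_cancel_left, Real.log_rpow hb0]
  have hlogK : Real.log (b ^ ((n : ℝ) + 1) / b ^ ((n : ℝ) + z)) = (1 - z) * Real.log b := by
    rw [← Real.rpow_sub hb0, add_sub_add_left_eq_sub, Real.log_rpow hb0]
  set c := b ^ (n : ℝ)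
  set p := b ^ ((n : ℝ) + z)
  set d := b ^ ((n : ℝ) + 1)
  have hc : 0 < c := Real.rpow_pos_of_pos hb0 _
  have hcp : c ≤ p := Real.rpow_le_rpow_of_exponent_le hb.le (by linarith)
  have hpd : p ≤ d := Real.rpow_le_rpow_of_exponent_le hb.le (by linarith)
  have hfJ : ∀ x ∈ Ico c p, lo ≤ x * f x ∧ x * f x ≤ hi :=
    fun x hx => hf x ⟨hx.1, hx.2.le.trans hpd⟩
  have hfK : ∀ x ∈ Ico p d, lo ≤ x * f x ∧ x * f x ≤ hi :=
    fun x hx => hf x ⟨hcp.trans hx.1, hx.2.le⟩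
  have hc_mem : c ∈ Icc c d := ⟨le_rfl, hcp.trans hpd⟩
  have hhi : 0 ≤ hi := hlo.trans ((hf c hc_mem).1.trans (hf c hc_mem).2)
  have hJ_le : μ.real (logSlice b n z) ≤ _ :=
    measureReal_Ico_le_of_mul_le hμ hc hcp hhi fun x hx => (hfJ x hx).2
  have hJ_ge : _ ≤ μ.real (logSlice b n z) :=
    le_measureReal_Ico_of_le_mul hμ hc hcp fun x hx => (hfJ x hx).1
  have hK_le := measureReal_Ico_le_of_mul_le hμ (hc.trans_le hcp) hpd hhi fun x hx => (hfK x hx).2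
  have hK_ge := le_measureReal_Ico_of_le_mul hμ (hc.trans_le hcp) hpd fun x hx => (hfK x hx).1
  have hsplit : μ.real (logSlice b n 1) = μ.real (logSlice b n z) + μ.real (Ico p d) := by
    rw [logSlice, logSlice, ← Ico_union_Ico_eq_Ico hcp hpd,
      measureReal_union Ico_disjoint_Ico_same measurableSet_Ico]
  rw [hlogJ] at hJ_le hJ_ge
  rw [hlogK] at hK_le hK_ge
  have h1z : 0 ≤ 1 - z := by linarith
  rw [hsplit, abs_le]
  constructor
  · linarith [mul_le_mul_of_nonneg_left hJ_ge h1z, mul_le_mul_of_nonneg_left hK_le hz0]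
  · linarith [mul_le_mul_of_nonneg_left hJ_le h1z, mul_le_mul_of_nonneg_left hK_ge hz0]

/-- When `G` increases on `(0, a]` and decreases on `[a, ∞)`, the difference
`unimodalVariation G a y - unimodalVariation G a x` is the total variation of `G` on `[x, y]`
for `0 < x ≤ y`. -/
def unimodalVariation (G : ℝ → ℝ) (a x : ℝ) : ℝ := G (min x a) + G a - G (max x a)

section Unimodal

variable {G : ℝ → ℝ} {a : ℝ}

lemma le_apply_of_unimodal (hmono : MonotoneOn G (Ioc 0 a)) (hanti : AntitoneOn G (Ici a))
    (ha : 0 < a) {x : ℝ} (hx : 0 < x) : G x ≤ G a := by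
  rcases le_total x a with hxa | hax
  · exact hmono ⟨hx, hxa⟩ ⟨ha, le_rfl⟩ hxa
  · exact hanti self_mem_Ici hax hax

lemma unimodalVariation_monotoneOn (hmono : MonotoneOn G (Ioc 0 a))
    (hanti : AntitoneOn G (Ici a)) (ha : 0 < a) : MonotoneOn (unimodalVariation G a) (Ioi 0) := by
  intro x hx y hy hxy
  have hmin : G (min x a) ≤ G (min y a) :=
    hmono ⟨lt_min hx ha, min_le_right _ _⟩ ⟨lt_min hy ha, min_le_right _ _⟩ (min_le_min_right a hxy)
  have hmax : G (max y a) ≤ G (max x a) :=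
    hanti (le_max_right x a) (le_max_right y a) (max_le_max_right a hxy)
  simp only [unimodalVariation]
  linarith

lemma unimodalVariation_nonneg (hG0 : ∀ x > 0, 0 ≤ G x) (hanti : AntitoneOn G (Ici a))
    (ha : 0 < a) {x : ℝ} (hx : 0 < x) : 0 ≤ unimodalVariation G a x := by
  have hmax : G (max x a) ≤ G a := hanti self_mem_Ici (le_max_right x a) (le_max_right x a)
  have := hG0 _ (lt_min hx ha)
  simp only [unimodalVariation]
  linarith

lemma unimodalVariation_le (hG0 : ∀ x > 0, 0 ≤ G x) (hmono : MonotoneOn G (Ioc 0 a))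
    (ha : 0 < a) {x : ℝ} (hx : 0 < x) : unimodalVariation G a x ≤ 2 * G a := by
  have hmin : G (min x a) ≤ G a :=
    hmono ⟨lt_min hx ha, min_le_right _ _⟩ ⟨ha, le_rfl⟩ (min_le_right _ _)
  have := hG0 (max x a) (lt_max_of_lt_right ha)
  simp only [unimodalVariation]
  linarith

lemma exists_bounds_sub_le_unimodalVariation (hG0 : ∀ x > 0, 0 ≤ G x)
    (hmono : MonotoneOn G (Ioc 0 a)) (hanti : AntitoneOn G (Ici a)) {c d : ℝ} (hc : 0 < c)
    (hcd : c ≤ d) :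
    ∃ lo hi, 0 ≤ lo ∧ hi - lo ≤ unimodalVariation G a d - unimodalVariation G a c ∧
      ∀ x ∈ Icc c d, lo ≤ G x ∧ G x ≤ hi := by
  have hd : 0 < d := hc.trans_le hcd
  rcases le_or_gt d a with hda | had
  · refine ⟨G c, G d, hG0 c hc, ?_, fun x hx => ⟨?_, ?_⟩⟩
    · simp only [unimodalVariation, min_eq_left hda, min_eq_left (hcd.trans hda),
        max_eq_right hda, max_eq_right (hcd.trans hda)]
      linarith
    · exact hmono ⟨hc, hcd.trans hda⟩ ⟨hc.trans_le hx.1, hx.2.trans hda⟩ hx.1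
    · exact hmono ⟨hc.trans_le hx.1, hx.2.trans hda⟩ ⟨hd, hda⟩ hx.2
  rcases le_or_gt a c with hac | hca
  · refine ⟨G d, G c, hG0 d hd, ?_, fun x hx => ⟨?_, ?_⟩⟩
    · simp only [unimodalVariation, min_eq_right hac, min_eq_right (hac.trans hcd),
        max_eq_left hac, max_eq_left (hac.trans hcd)]
      linarith
    · exact hanti (hac.trans hx.1) (hac.trans hcd) hx.2
    · exact hanti hac (hac.trans hx.1) hx.1
  have ha : 0 < a := hc.trans hca
  refine ⟨min (G c) (G d), G a, le_min (hG0 c hc) (hG0 d hd), ?_, fun x hx => ⟨?_, ?_⟩⟩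
  · simp only [unimodalVariation, min_eq_left hca.le, min_eq_right had.le, max_eq_right hca.le,
      max_eq_left had.le]
    have := le_apply_of_unimodal hmono hanti ha hc
    have := le_apply_of_unimodal hmono hanti ha hd
    rcases min_choice (G c) (G d) with h | h <;> rw [h] <;> linarith
  · rcases le_total x a with hxa | hax
    · exact (min_le_left _ _).trans (hmono ⟨hc, hca.le⟩ ⟨hc.trans_le hx.1, hxa⟩ hx.1)
    · exact (min_le_right _ _).trans (hanti hax had.le hx.2)
  · exact le_apply_of_unimodal hmono hanti ha (hc.trans_le hx.1)

end Unimodal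

lemma abs_le_of_hasSum_of_abs_le_sub {u W : ℤ → ℝ} {s C lo hi : ℝ} (hs : HasSum u s)
    (hW : Monotone W) (hlo : ∀ n, lo ≤ W n) (hhi : ∀ n, W n ≤ hi) (hC : 0 ≤ C)
    (hu : ∀ n, |u n| ≤ C * (W (n + 1) - W n)) : |s| ≤ C * (hi - lo) := by
  have hpartial : ∀ F : Finset ℤ, |∑ n ∈ F, u n| ≤ C * (hi - lo) := by
    intro F
    obtain ⟨k, hk⟩ : ∃ k : ℕ, F ⊆ Finset.Ico (-k : ℤ) k := by
      refine ⟨F.sup Int.natAbs + 1, fun n hn => ?_⟩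
      have := Finset.le_sup (f := Int.natAbs) hn
      simp only [Finset.mem_Ico]
      omega
    have hstep : ∀ n, 0 ≤ C * (W (n + 1) - W n) :=
      fun n => mul_nonneg hC (sub_nonneg.2 (hW (Int.le_add_one le_rfl)))
    calc |∑ n ∈ F, u n| ≤ ∑ n ∈ F, C * (W (n + 1) - W n) :=
          (Finset.abs_sum_le_sum_abs u F).trans (Finset.sum_le_sum fun n _ => hu n)
      _ ≤ ∑ n ∈ Finset.Ico (-k : ℤ) k, C * (W (n + 1) - W n) :=
          Finset.sum_le_sum_of_subset_of_nonneg hk fun n _ _ => hstep n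
      _ = C * (W k - W (-k)) := by
          rw [← Finset.mul_sum, ← neg_sub (W (-k)), ← Finset.sum_Ico_int_sub,
            ← Finset.sum_neg_distrib]
          simp only [neg_sub]
      _ ≤ C * (hi - lo) := mul_le_mul_of_nonneg_left (sub_le_sub (hhi k) (hlo (-k))) hC
  rw [abs_le]
  exact ⟨le_hasSum_of_le_sum hs fun F => (abs_le.1 (hpartial F)).1,
    hasSum_le_of_sum_le hs fun F => (abs_le.1 (hpartial F)).2⟩

section UnimodalDensity

variable {μ : Measure ℝ} {f : ℝ → ℝ} {a b z : ℝ}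

lemma abs_measureReal_logSlice_sub_le_unimodalVariation [IsFiniteMeasure μ]
    (hμ : μ = volume.withDensity fun x => ENNReal.ofReal (f x)) (hb : 1 < b) (hz0 : 0 ≤ z)
    (hz1 : z ≤ 1) (hf0 : ∀ x > 0, 0 ≤ f x) (hmono : MonotoneOn (fun x => x * f x) (Ioc 0 a))
    (hanti : AntitoneOn (fun x => x * f x) (Ici a)) (n : ℤ) :
    |μ.real (logSlice b n z) - z * μ.real (logSlice b n 1)|
      ≤ z * (1 - z) * Real.log b * (unimodalVariation (fun x => x * f x) a (b ^ ((n + 1 : ℤ) : ℝ))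
        - unimodalVariation (fun x => x * f x) a (b ^ (n : ℝ))) := by
  obtain ⟨lo, hi, hlo, hhi, hbounds⟩ := exists_bounds_sub_le_unimodalVariation
    (fun x hx => mul_nonneg hx.le (hf0 x hx)) hmono hanti
    (Real.rpow_pos_of_pos (by linarith) n) (d := b ^ ((n : ℝ) + 1))
    (Real.rpow_le_rpow_of_exponent_le hb.le (by linarith))
  have hcoef : 0 ≤ z * (1 - z) * Real.log b :=
    mul_nonneg (mul_nonneg hz0 (sub_nonneg.2 hz1)) (Real.log_nonneg hb.le)
  push_cast
  exact (abs_measureReal_logSlice_sub_le hμ hb n hz0 hz1 hlo hbounds).trans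
    (mul_le_mul_of_nonneg_left hhi hcoef)

lemma abs_measureReal_fract_logb_lt_sub_le [IsProbabilityMeasure μ]
    (hμ : μ = volume.withDensity fun x => ENNReal.ofReal (f x)) (hμ0 : μ (Iic 0) = 0)
    (hb : 1 < b) (hz0 : 0 ≤ z) (hz1 : z ≤ 1) (hf0 : ∀ x > 0, 0 ≤ f x) (ha : 0 < a)
    (hmono : MonotoneOn (fun x => x * f x) (Ioc 0 a))
    (hanti : AntitoneOn (fun x => x * f x) (Ici a)) :
    |μ.real {x | Int.fract (Real.logb b x) < z} - z|
      ≤ z * (1 - z) * Real.log b * (2 * (a * f a)) := by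
  have hG0 : ∀ x > 0, 0 ≤ x * f x := fun x hx => mul_nonneg hx.le (hf0 x hx)
  have hpow_pos : ∀ t : ℝ, 0 < b ^ t := fun t => Real.rpow_pos_of_pos (by linarith) t
  simpa using abs_le_of_hasSum_of_abs_le_sub (hasSum_logSlice_error hb hz1 hμ0)
    (fun n n' hnn' => unimodalVariation_monotoneOn hmono hanti ha (hpow_pos _) (hpow_pos _)
      (Real.rpow_le_rpow_of_exponent_le hb.le (Int.cast_le.2 hnn')))
    (fun n => unimodalVariation_nonneg hG0 hanti ha (hpow_pos _))
    (fun n => unimodalVariation_le hG0 hmono ha (hpow_pos _))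
    (mul_nonneg (mul_nonneg hz0 (sub_nonneg.2 hz1)) (Real.log_nonneg hb.le))
    (abs_measureReal_logSlice_sub_le_unimodalVariation hμ hb hz0 hz1 hf0 hmono hanti)

end UnimodalDensity

theorem benford_of_scatter_regularity_general
    (μ : Measure ℝ) [IsProbabilityMeasure μ] (f : ℝ → ℝ)
    (hf0 : ∀ x, 0 ≤ f x) (hsupp : ∀ x ≤ 0, f x = 0)
    (hμ : μ = volume.withDensity (fun x => ENNReal.ofReal (f x)))
    (a m : ℝ) (ha : 0 < a) (hm : m = a * f a)
    (hmono : MonotoneOn (fun x => x * f x) (Ioc 0 a))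
    (hanti : AntitoneOn (fun x => x * f x) (Ici a)) :
    ∀ z ∈ Ioc (0 : ℝ) 1,
      |(μ {x : ℝ | Int.fract (Real.logb 10 x) < z}).toReal - z|
        < 2 * Real.log 10 * m := by
  rintro z ⟨hz0, hz1⟩
  have hμ0 : μ (Iic 0) = 0 :=
    hμ ▸ withDensity_ofReal_eq_zero _ measurableSet_Iic fun x hx => (hsupp x hx).le
  have hm0 : 0 < m := by
    by_contra! hm0
    have hf : ∀ x, f x ≤ 0 := fun x => by
      rcases le_or_gt x 0 with hx | hx
      · exact (hsupp x hx).le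
      · have := le_apply_of_unimodal hmono hanti ha hx
        nlinarith
    have := hμ ▸ withDensity_ofReal_eq_zero volume MeasurableSet.univ fun x _ => hf x
    simp at this
  have hz : z * (1 - z) < 1 := by nlinarith
  calc |(μ {x : ℝ | Int.fract (Real.logb 10 x) < z}).toReal - z|
      ≤ z * (1 - z) * Real.log 10 * (2 * (a * f a)) :=
        abs_measureReal_fract_logb_lt_sub_le hμ hμ0 (by norm_num) hz0.le hz1 (fun x _ => hf0 x) ha
          hmono hanti
    _ = z * (1 - z) * (2 * Real.log 10 * m) := by rw [hm]; ring
    _ < 1 * (2 * Real.log 10 * m) := by gcongr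
    _ = 2 * Real.log 10 * m := one_mul _

/-- Theorem 1: if `X` is a positive continuous r.v. with density `f` such that
`x ↦ x·f(x)` attains its maximum `m` at some `a > 0`, is nondecreasing on `(0,a]`
and nonincreasing on `[a,∞)`, then `|P({log₁₀ X} < z) − z| < 2 ln(10) m`
for every `z ∈ (0,1]`. -/
theorem benford_of_scatter_regularity
    (μ : Measure ℝ) [IsProbabilityMeasure μ] (f : ℝ → ℝ)
    (hf0 : ∀ x, 0 ≤ f x) (hsupp : ∀ x ≤ 0, f x = 0)
    (hμ : μ = volume.withDensity (fun x => ENNReal.ofReal (f x)))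
    (a m : ℝ) (ha : 0 < a) (hm : m = a * f a)
    (hmax : ∀ x, x * f x ≤ m)
    (hmono : MonotoneOn (fun x => x * f x) (Ioc 0 a))
    (hanti : AntitoneOn (fun x => x * f x) (Ici a)) :
    ∀ z ∈ Ioc (0 : ℝ) 1,
      |(μ {x : ℝ | Int.fract (Real.logb 10 x) < z}).toReal - z|
        < 2 * Real.log 10 * m :=
  benford_of_scatter_regularity_general μ f hf0 hsupp hμ a m ha hm hmono hanti
end

section
/- Let X follow a type I Pareto distribution with parameters x₀ > 0 and α > 0, i.e., with density f(x) = α·x₀^α / x^(α+1) for x ≥ x₀ and 0 otherwise. Then for every z ∈ (0, 1], |P({log₁₀ X} < z) − z| < 2·ln(10)·α. -/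
/-!
Writing `x₀ = 10 ^ y₀`, the variable `log₁₀ X` is `y₀` plus an exponential variable of rate
`L = α ln 10`. Hence `P({log₁₀ X} < z)` is the sum over `n ∈ ℤ` of the tail differences
`P(log₁₀ X ≥ n) - P(log₁₀ X ≥ n + z)`: one term from the unit interval containing `y₀`, followed by
a geometric series of ratio `e^{-L}`. The bounds `1 - u ≤ e^{-u}`, `1 + L ≤ e^L` and the concavity
of `u ↦ 1 - e^{-u}` put this closed form within `2L` of `z`.
-/

open MeasureTheory Set Real ProbabilityTheory Function

theorem setOf_fract_lt_eq_iUnion (z : ℝ) :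
    {y : ℝ | Int.fract y < z} = ⋃ n : ℤ, Ico (n : ℝ) (n + z) := by
  ext y
  simp only [mem_ofPred_eq, mem_iUnion, mem_Ico]
  constructor
  · intro h
    exact ⟨⌊y⌋, Int.floor_le y, by linarith [Int.self_sub_floor y]⟩
  · rintro ⟨n, hny, hyn⟩
    have : (n : ℝ) ≤ ⌊y⌋ := Int.cast_le.mpr (Int.le_floor.mpr hny)
    rw [Int.fract]
    linarith

theorem pairwise_disjoint_Ico_intCast_add {z : ℝ} (hz : z ≤ 1) :
    Pairwise (Disjoint on fun n : ℤ => Ico (n : ℝ) (n + z)) :=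
  fun _ _ hmn => ((pairwise_disjoint_Ico_intCast ℝ) hmn).mono
    (Ico_subset_Ico_right (by linarith)) (Ico_subset_Ico_right (by linarith))

theorem hasSum_measureReal_fract_lt (ν : Measure ℝ) [IsFiniteMeasure ν] {z : ℝ}
    (hz₀ : 0 ≤ z) (hz₁ : z ≤ 1) :
    HasSum (fun n : ℤ => ν.real (Ici (n : ℝ)) - ν.real (Ici (n + z)))
      (ν.real {y | Int.fract y < z}) := by
  have hsum : ν {y | Int.fract y < z} = ∑' n : ℤ, ν (Ico (n : ℝ) (n + z)) := by
    rw [setOf_fract_lt_eq_iUnion,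
      measure_iUnion (pairwise_disjoint_Ico_intCast_add hz₁) fun _ => measurableSet_Ico]
  rw [measureReal_def, hsum, ENNReal.tsum_toReal_eq fun _ => measure_ne_top _ _]
  convert ENNReal.hasSum_toReal (hsum ▸ measure_ne_top ν _) using 2 with n
  rw [← Ici_sdiff_Ici, ← measureReal_def,
    measureReal_sdiff (Ici_subset_Ici.mpr (by linarith)) measurableSet_Ici]

theorem measurable_logb {b : ℝ} : Measurable (logb b) :=
  measurable_log.div_const _

section Pareto

variable {t r : ℝ}

theorem paretoMeasure_eq_withDensity (ht : 0 < t) :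
    paretoMeasure t r = volume.withDensity fun x =>
      ENNReal.ofReal (if t ≤ x then r * t ^ r / x ^ (r + 1) else 0) := by
  rw [paretoMeasure]
  congr 1
  funext x
  rw [paretoPDF_eq]
  split_ifs with hx
  · rw [rpow_neg (ht.le.trans hx), div_eq_mul_inv]
  · rfl

theorem paretoMeasure_Iio : paretoMeasure t r (Iio t) = 0 := by
  rw [paretoMeasure, withDensity_apply _ measurableSet_Iio, lintegral_paretoPDF_of_le le_rfl]

theorem paretoMeasure_real_Ici (ht : 0 < t) (hr : 0 < r) (x : ℝ) :
    (paretoMeasure t r).real (Ici x) = (t / max t x) ^ r := by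
  set c := max t x
  have hc : 0 < c := lt_max_of_lt_left ht
  have hIci : paretoMeasure t r (Ici x) = paretoMeasure t r (Ici c) := by
    rw [← measure_inter_conull (t := Ici t) (by rw [compl_Ici, paretoMeasure_Iio]),
      Ici_inter_Ici, sup_comm]
  have hval : ∫ y in Ioi c, r * t ^ r * y ^ (-(r + 1)) = (t / c) ^ r := by
    rw [integral_const_mul, integral_Ioi_rpow_of_lt (by linarith) hc, div_rpow ht.le hc.le,
      show -(r + 1) + 1 = -r by ring, rpow_neg hc.le]
    field_simp
  have hnonneg : 0 ≤ᵐ[volume.restrict (Ioi c)] fun y => r * t ^ r * y ^ (-(r + 1)) :=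
    (ae_restrict_iff' measurableSet_Ioi).mpr <| ae_of_all _ fun y (hy : c < y) => by
      have := hc.trans hy
      positivity
  have hint : IntegrableOn (fun y => r * t ^ r * y ^ (-(r + 1))) (Ioi c) :=
    (integrableOn_Ioi_rpow_of_lt (by linarith) hc).const_mul _
  rw [measureReal_def, hIci, paretoMeasure, withDensity_apply _ measurableSet_Ici,
    setLIntegral_congr_fun measurableSet_Ici fun y hy =>
      paretoPDF_of_le ((le_max_left t x).trans hy),
    setLIntegral_congr Ioi_ae_eq_Ici.symm, ← ofReal_integral_eq_lintegral_ofReal hint hnonneg, hval,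
    ENNReal.toReal_ofReal (by positivity)]

theorem paretoMeasure_map_logb_real_Ici (ht : 0 < t) (hr : 0 < r) {b : ℝ} (hb : 1 < b) (s : ℝ) :
    ((paretoMeasure t r).map (logb b)).real (Ici s)
      = exp (-(r * log b * max 0 (s - logb b t))) := by
  have hb₀ : 0 < b := by linarith
  have hpre : logb b ⁻¹' Ici s ∩ Ioi 0 = Ici (b ^ s) := by
    ext x
    simp only [mem_inter_iff, mem_preimage, mem_Ici, mem_Ioi]
    constructor
    · rintro ⟨hsx, hx⟩
      exact (le_logb_iff_rpow_le hb hx).mp hsx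
    · intro hsx
      have hx : 0 < x := (rpow_pos_of_pos hb₀ s).trans_le hsx
      exact ⟨(le_logb_iff_rpow_le hb hx).mpr hsx, hx⟩
  have hnull : paretoMeasure t r (Ioi 0)ᶜ = 0 :=
    measure_mono_null (by rw [compl_Ioi]; exact Iic_subset_Iio.mpr ht) paretoMeasure_Iio
  set y := logb b t
  have hmax : max y s - y = max 0 (s - y) := by rw [← max_sub_sub_right y s y, sub_self]
  rw [measureReal_def, Measure.map_apply measurable_logb measurableSet_Ici,
    ← measure_inter_conull hnull, hpre, ← measureReal_def, paretoMeasure_real_Ici ht hr,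
    ← rpow_logb hb₀ hb.ne' ht, ← (monotone_rpow_of_base_ge_one hb.le).map_max, ← rpow_sub hb₀,
    ← rpow_mul hb₀.le, rpow_def_of_pos hb₀]
  congr 1
  linear_combination (-(log b * r)) * hmax

end Pareto

theorem mul_one_sub_exp_neg_le {z : ℝ} (hz₀ : 0 ≤ z) (hz₁ : z ≤ 1) (L : ℝ) :
    z * (1 - exp (-L)) ≤ 1 - exp (-(L * z)) := by
  have h := convexOn_exp.2 (mem_univ 0) (mem_univ (-L)) (sub_nonneg.mpr hz₁) hz₀ (by ring)
  simp only [smul_eq_mul, mul_zero, zero_add, exp_zero, mul_one] at h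
  rw [show z * -L = -(L * z) by ring] at h
  linarith

/-- `P({Y} < z)` for `Y = y + E` with `E` exponential of rate `L` and `{y} = θ`. -/
noncomputable def shiftedExpFractProb (L θ z : ℝ) : ℝ :=
  1 - exp (-(L * max 0 (z - θ))) + exp (-(L * (1 - θ))) * (1 - exp (-(L * z))) / (1 - exp (-L))

section ShiftedExp

variable {L z : ℝ}

theorem hasSum_shiftedExp_tail_sub (hL : 0 < L) (y : ℝ) (hz₀ : 0 ≤ z) (hz₁ : z ≤ 1) :
    HasSum (fun n : ℤ => exp (-(L * max 0 (n - y))) - exp (-(L * max 0 (n + z - y))))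
      (shiftedExpFractProb L (Int.fract y) z) := by
  set θ := Int.fract y
  have hθ₀ : 0 ≤ θ := Int.fract_nonneg y
  have hθ₁ : θ < 1 := Int.fract_lt_one y
  set g : ℝ → ℝ := fun u => exp (-(L * max 0 u)) - exp (-(L * max 0 (u + z)))
  have hshift : ∀ m : ℤ, ((m + ⌊y⌋ : ℤ) : ℝ) - y = m - θ := fun m => by
    simp only [θ, Int.fract]; push_cast; ring
  have hnat : HasSum (fun k : ℕ => g (k - θ)) (shiftedExpFractProb L θ z) := by
    have hsucc : ∀ k : ℕ, g ((k + 1 : ℕ) - θ)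
        = exp (-(L * (1 - θ))) * (1 - exp (-(L * z))) * exp (-L) ^ k := fun k => by
      have hk : (0 : ℝ) ≤ k := k.cast_nonneg
      simp only [g]
      push_cast
      rw [max_eq_right (by linarith), max_eq_right (by linarith), ← exp_nat_mul]
      simp only [mul_sub, sub_mul, mul_one, ← exp_add]
      congr 2 <;> ring
    have hgeom := (hasSum_geometric_of_lt_one (exp_pos (-L)).le
      (exp_lt_one_iff.mpr (by linarith))).mul_left (exp (-(L * (1 - θ))) * (1 - exp (-(L * z))))
    convert HasSum.zero_add (f := fun k : ℕ => g (k - θ))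
      (by simpa only [hsucc] using hgeom) using 1
    rw [shiftedExpFractProb, div_eq_mul_inv]
    simp only [g, Nat.cast_zero, zero_sub, max_eq_left (by linarith : -θ ≤ 0), mul_zero, neg_zero,
      exp_zero, neg_add_eq_sub]
  have hneg : HasSum (fun k : ℕ => g (-(k + 1) - θ)) 0 := by
    convert hasSum_zero with k
    have hk : (0 : ℝ) ≤ k := k.cast_nonneg
    simp only [g, max_eq_left (by linarith : -((k : ℝ) + 1) - θ ≤ 0),
      max_eq_left (by linarith : -((k : ℝ) + 1) - θ + z ≤ 0), sub_self]
  rw [← (Equiv.addRight ⌊y⌋).hasSum_iff, ← add_zero (shiftedExpFractProb L θ z)]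
  convert HasSum.of_nat_of_neg_add_one (f := fun m : ℤ => g (m - θ)) ?_ ?_ using 2 with m
  · simp only [comp_apply, Equiv.coe_addRight, g, hshift, add_sub_right_comm]
  · simpa using hnat
  · simpa using hneg

theorem abs_shiftedExpFractProb_sub_lt (hL : 0 < L) {θ : ℝ} (hθ₀ : 0 ≤ θ) (hθ₁ : θ ≤ 1)
    (hz₀ : 0 < z) (hz₁ : z ≤ 1) :
    |shiftedExpFractProb L θ z - z| < 2 * L := by
  have hq : 0 < 1 - exp (-L) := sub_pos.mpr (exp_lt_one_iff.mpr (by linarith))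
  have hLz : 0 < L * z := mul_pos hL hz₀
  have hexp_le_one : exp (-(L * (1 - θ))) ≤ 1 := exp_le_one_iff.mpr (by nlinarith)
  have hratio : z ≤ (1 - exp (-(L * z))) / (1 - exp (-L)) :=
    (le_div_iff₀ hq).mpr (mul_one_sub_exp_neg_le hz₀.le hz₁ L)
  rw [shiftedExpFractProb, mul_div_assoc]
  set A := 1 - exp (-(L * max 0 (z - θ)))
  set B := exp (-(L * (1 - θ))) * ((1 - exp (-(L * z))) / (1 - exp (-L)))
  have hA₀ : 0 ≤ A := sub_nonneg.mpr (exp_le_one_iff.mpr (by nlinarith [le_max_left 0 (z - θ)]))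
  have hA₁ : A ≤ L * z := by
    have hmax : L * max 0 (z - θ) ≤ L * z :=
      mul_le_mul_of_nonneg_left (max_le hz₀.le (by linarith)) hL.le
    linarith [one_sub_le_exp_neg (L * max 0 (z - θ))]
  have hB₀ : z - L ≤ B :=
    calc z - L ≤ (1 - L) * z := by nlinarith
      _ ≤ exp (-L) * z := mul_le_mul_of_nonneg_right (one_sub_le_exp_neg L) hz₀.le
      _ ≤ B := mul_le_mul (exp_le_exp.mpr (by nlinarith)) hratio hz₀.le (exp_pos _).le
  have hB₁ : B < z + L * z := by
    have hdecay : (1 + L) * exp (-L) ≤ 1 := by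
      rw [exp_neg, mul_inv_le_iff₀ (exp_pos L)]
      linarith [add_one_le_exp L]
    calc B ≤ (1 - exp (-(L * z))) / (1 - exp (-L)) :=
          mul_le_of_le_one_left (hz₀.le.trans hratio) hexp_le_one
      _ < L * z / (1 - exp (-L)) :=
          div_lt_div_of_pos_right (by linarith [one_sub_lt_exp_neg hLz.ne']) hq
      _ ≤ z + L * z := by
          rw [div_le_iff₀ hq]
          nlinarith [mul_le_mul_of_nonneg_left hdecay hz₀.le]
  have hLz_le : L * z ≤ L := mul_le_of_le_one_right hL.le hz₁
  rw [abs_lt]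
  constructor <;> linarith

end ShiftedExp

/-- A type I Pareto r.v. with parameters `x₀ > 0`, `α > 0` satisfies
`|P({log₁₀ X} < z) − z| < 2 ln(10) α` for every `z ∈ (0,1]`. -/
theorem pareto_I_near_benford
    (x₀ α : ℝ) (hx₀ : 0 < x₀) (hα : 0 < α)
    (f : ℝ → ℝ)
    (hf : ∀ x, f x = if x₀ ≤ x then α * x₀ ^ α / x ^ (α + 1) else 0)
    (μ : Measure ℝ)
    (hμ : μ = volume.withDensity (fun x => ENNReal.ofReal (f x))) :
    ∀ z ∈ Ioc (0 : ℝ) 1,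
      |(μ {x : ℝ | Int.fract (Real.logb 10 x) < z}).toReal - z|
        < 2 * Real.log 10 * α := by
  rintro z ⟨hz₀, hz₁⟩
  simp only [hf, ← paretoMeasure_eq_withDensity hx₀] at hμ
  subst hμ
  have := isProbabilityMeasure_paretoMeasure hx₀ hα
  set ν := (paretoMeasure x₀ α).map (logb 10)
  have hpush : (paretoMeasure x₀ α).real {x | Int.fract (logb 10 x) < z}
      = ν.real {y | Int.fract y < z} := by
    rw [measureReal_def, measureReal_def,
      Measure.map_apply measurable_logb (measurableSet_lt measurable_fract measurable_const)]
    rfl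
  have hsum := hasSum_measureReal_fract_lt ν hz₀.le hz₁
  simp only [ν, paretoMeasure_map_logb_real_Ici hx₀ hα (by norm_num : (1 : ℝ) < 10)] at hsum
  have hrate : 0 < α * log 10 := by positivity
  rw [← measureReal_def, hpush, hsum.unique (hasSum_shiftedExp_tail_sub hrate _ hz₀.le hz₁)]
  calc _ < 2 * (α * log 10) :=
        abs_shiftedExpFractProb_sub_lt hrate (Int.fract_nonneg _) (Int.fract_lt_one _).le hz₀ hz₁
    _ = 2 * log 10 * α := by ring
end
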